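/- Under the setup with nested projections H₀ ≤ H_ℓ, B(φ) = sin²φ·I_n + δ·H_ℓ, and A(φ) = X₀ᵀB(φ)⁻¹X₀, the scalar D(φ) = yᵀ[B(φ)⁻¹ − B(φ)⁻¹X₀A(φ)⁻¹X₀ᵀB(φ)⁻¹]y satisfies D(φ) = (1/(δ + sin²φ))·((δ/sin²φ)·RSS_ℓ + RSS₀), where RSS_ℓ = yᵀ(I_n − H_ℓ)y and RSS₀ = yᵀ(I_n − H₀)y. -/
import Mathlib


open Matrix Real

lemma aux_isUnit_of_rank_eq {d : ℕ} (M : Matrix (Fin d) (Fin d) ℝ) (h : M.rank = d) :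
    IsUnit M := by
  rw [← Matrix.mulVec_surjective_iff_isUnit]
  have hr : LinearMap.range M.mulVecLin = ⊤ := by
    apply Submodule.eq_top_of_finrank_eq
    rw [← Matrix.rank, h]
    simp
  intro v
  have := hr ▸ Submodule.mem_top (x := v) (R := ℝ)
  obtain ⟨w, hw⟩ := this
  exact ⟨w, hw⟩

theorem stmt_9 (n d₀ dl : ℕ)
    (X₀ : Matrix (Fin n) (Fin d₀) ℝ) (Xl : Matrix (Fin n) (Fin dl) ℝ)
    (hX₀ : X₀.rank = d₀) (hXl : Xl.rank = dl)
    (hsub : LinearMap.range X₀.mulVecLin ≤ LinearMap.range Xl.mulVecLin)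
    (y : Fin n → ℝ) (δ φ : ℝ) (hδ : 0 < δ) (hφ₁ : 0 < φ) (hφ₂ : φ < π / 2)
    (B : Matrix (Fin n) (Fin n) ℝ) (A : Matrix (Fin d₀) (Fin d₀) ℝ)
    (hB : B = Real.sin φ ^ 2 • (1 : Matrix (Fin n) (Fin n) ℝ) +
        δ • (Xl * (Xlᵀ * Xl)⁻¹ * Xlᵀ))
    (hA : A = X₀ᵀ * B⁻¹ * X₀) :
    y ⬝ᵥ ((B⁻¹ - B⁻¹ * X₀ * A⁻¹ * X₀ᵀ * B⁻¹) *ᵥ y) =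
      (1 / (δ + Real.sin φ ^ 2)) *
        ((δ / Real.sin φ ^ 2) *
            (y ⬝ᵥ (((1 : Matrix (Fin n) (Fin n) ℝ) - Xl * (Xlᵀ * Xl)⁻¹ * Xlᵀ) *ᵥ y)) +
          y ⬝ᵥ (((1 : Matrix (Fin n) (Fin n) ℝ) - X₀ * (X₀ᵀ * X₀)⁻¹ * X₀ᵀ) *ᵥ y)) := by
  set s : ℝ := Real.sin φ ^ 2 with hsdef
  have hsin : 0 < Real.sin φ := Real.sin_pos_of_pos_of_lt_pi hφ₁
    (lt_trans hφ₂ (by linarith [Real.pi_pos]))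
  have hs : 0 < s := by positivity
  have hs0 : s ≠ 0 := ne_of_gt hs
  have hsd : s + δ ≠ 0 := by positivity
  clear_value s
  set Hl : Matrix (Fin n) (Fin n) ℝ := Xl * (Xlᵀ * Xl)⁻¹ * Xlᵀ with hHl
  set H0 : Matrix (Fin n) (Fin n) ℝ := X₀ * (X₀ᵀ * X₀)⁻¹ * X₀ᵀ with hH0
  -- invertibility of Gram matrices
  have hul : IsUnit (Xlᵀ * Xl) :=
    aux_isUnit_of_rank_eq _ (by rw [Matrix.rank_transpose_mul_self, hXl])
  have hu0 : IsUnit (X₀ᵀ * X₀) :=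
    aux_isUnit_of_rank_eq _ (by rw [Matrix.rank_transpose_mul_self, hX₀])
  have huld : IsUnit (Xlᵀ * Xl).det := (Matrix.isUnit_iff_isUnit_det _).mp hul
  have hu0d : IsUnit (X₀ᵀ * X₀).det := (Matrix.isUnit_iff_isUnit_det _).mp hu0
  have hGl : (Xlᵀ * Xl)⁻¹ * (Xlᵀ * Xl) = 1 := Matrix.nonsing_inv_mul _ huld
  have hG0 : (X₀ᵀ * X₀) * (X₀ᵀ * X₀)⁻¹ = 1 := Matrix.mul_nonsing_inv _ hu0d
  -- Hl fixes Xl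
  have h1 : Hl * Xl = Xl := by
    have h := congr_arg (fun M => Xl * M) hGl
    simp only [Matrix.mul_one] at h
    rw [hHl]
    simpa only [Matrix.mul_assoc] using h
  have h4 : Hl * Hl = Hl := by
    nth_rewrite 2 [hHl]
    rw [← Matrix.mul_assoc, ← Matrix.mul_assoc, h1]
  have hHlsym : Hlᵀ = Hl := by
    rw [hHl]
    simp [Matrix.transpose_mul, Matrix.transpose_nonsing_inv, Matrix.mul_assoc]
  -- Hl fixes X₀
  have h2 : Hl * X₀ = X₀ := by
    have key : ∀ v : Fin d₀ → ℝ, Hl *ᵥ (X₀ *ᵥ v) = X₀ *ᵥ v := by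
      intro v
      obtain ⟨w, hw⟩ := hsub ⟨v, rfl⟩
      simp only [Matrix.mulVecLin_apply] at hw
      rw [← hw, Matrix.mulVec_mulVec, h1]
    ext i j
    have := congr_fun (key (Pi.single j 1)) i
    rw [Matrix.mulVec_mulVec] at this
    simpa using this
  -- explicit inverse of B
  set c : ℝ := δ / (s * (s + δ)) with hc
  clear_value c
  set Binv : Matrix (Fin n) (Fin n) ℝ := (1 / s) • (1 : Matrix (Fin n) (Fin n) ℝ) - c • Hl
    with hBinvdef
  have hBB : B * Binv = 1 := by
    rw [hB, hBinvdef]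
    simp only [Matrix.add_mul, Matrix.mul_sub, Matrix.smul_mul, Matrix.mul_smul,
      Matrix.one_mul, Matrix.mul_one, ← hHl, h4, smul_smul]
    match_scalars <;> (try simp only [hc]) <;> field_simp <;> (try ring) <;> tauto
  have hBinv : B⁻¹ = Binv := Matrix.inv_eq_right_inv hBB
  have hBsym : B⁻¹ᵀ = B⁻¹ := by
    rw [hBinv, hBinvdef]
    simp [Matrix.transpose_smul, hHlsym]
  -- B⁻¹ X₀
  have hBX : B⁻¹ * X₀ = (1 / (s + δ)) • X₀ := by
    rw [hBinv, hBinvdef, Matrix.sub_mul, Matrix.smul_mul, Matrix.smul_mul, Matrix.one_mul, h2]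
    match_scalars <;> (try simp only [hc]) <;> field_simp <;> (try ring) <;> tauto
  have hXB : X₀ᵀ * B⁻¹ = (1 / (s + δ)) • X₀ᵀ := by
    have := congr_arg Matrix.transpose hBX
    rw [Matrix.transpose_mul, hBsym, Matrix.transpose_smul] at this
    exact this
  -- A and its inverse
  have hA' : A = (1 / (s + δ)) • (X₀ᵀ * X₀) := by
    rw [hA, Matrix.mul_assoc, hBX, Matrix.mul_smul]
  have hAinv : A⁻¹ = (s + δ) • (X₀ᵀ * X₀)⁻¹ := by
    apply Matrix.inv_eq_right_inv
    rw [hA', Matrix.smul_mul, Matrix.mul_smul, hG0, smul_smul]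
    rw [show (1 / (s + δ)) * (s + δ) = 1 by field_simp]
    simp
  -- the product term
  have hprod : B⁻¹ * X₀ * A⁻¹ * X₀ᵀ * B⁻¹ = (1 / (s + δ)) • H0 := by
    rw [Matrix.mul_assoc (B⁻¹ * X₀ * A⁻¹), hXB, hBX, hAinv]
    rw [hH0]
    simp only [Matrix.smul_mul, Matrix.mul_smul, smul_smul, Matrix.mul_assoc]
    match_scalars <;> field_simp <;> tauto
  -- main matrix identity
  have hM : B⁻¹ - B⁻¹ * X₀ * A⁻¹ * X₀ᵀ * B⁻¹ =
      (1 / (δ + s)) • ((δ / s) • ((1 : Matrix (Fin n) (Fin n) ℝ) - Hl) +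
        ((1 : Matrix (Fin n) (Fin n) ℝ) - H0)) := by
    rw [hprod, hBinv, hBinvdef]
    match_scalars <;> (try simp only [hc]) <;> field_simp <;> (try ring) <;> tauto
  rw [hM]
  simp only [Matrix.smul_mulVec, Matrix.add_mulVec, dotProduct_add, dotProduct_smul,
    smul_eq_mul]
  try ring
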